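/- The set Λ = {m + nφ : m, n ∈ ℤ, -1 ≤ m + nφ' ≤ φ - 1} is uniformly discrete in ℝ: there exists r > 0 such that any two distinct elements of Λ are at distance at least r. -/

import Mathlib

noncomputable def goldenφ : ℝ := (1 + Real.sqrt 5) / 2
noncomputable def goldenφ' : ℝ := (1 - Real.sqrt 5) / 2

noncomputable def goldenΛ : Set ℝ :=
  {x | ∃ m n : ℤ, x = m + n * goldenφ ∧
    -1 ≤ (m : ℝ) + n * goldenφ' ∧ (m : ℝ) + n * goldenφ' ≤ goldenφ - 1}

/-!
The difference of two points of `goldenΛ` is `x = a + bφ` with conjugate `x' = a + bψ` lying in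
`[-φ, φ]`, the difference set of the window. The norm `x x' = a² + ab - b²` is a nonzero integer
when `x ≠ 0`, so `|x| ≥ 1 / |x'| ≥ φ⁻¹`.
-/

open Real goldenRatio

theorem int_add_int_mul_goldenRatio_mul_conj (a b : ℤ) :
    ((a : ℝ) + b * φ) * (a + b * ψ) = ((a ^ 2 + a * b - b ^ 2 : ℤ) : ℝ) := by
  have hsum := goldenRatio_add_goldenConj
  have hprod := goldenRatio_mul_goldenConj
  push_cast
  linear_combination (a * b : ℝ) * hsum + (b ^ 2 : ℝ) * hprod

theorem int_add_int_mul_goldenConj_ne_zero {a b : ℤ} (h : (a : ℝ) + b * φ ≠ 0) :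
    (a : ℝ) + b * ψ ≠ 0 := by
  rcases eq_or_ne b 0 with rfl | hb
  · simpa using h
  · exact (goldenConj_irrational.intCast_mul hb).intCast_add a |>.ne_zero

theorem one_le_abs_int_add_int_mul_goldenRatio_mul_abs_conj {a b : ℤ} (h : (a : ℝ) + b * φ ≠ 0) :
    1 ≤ |(a : ℝ) + b * φ| * |(a : ℝ) + b * ψ| := by
  have hnorm := int_add_int_mul_goldenRatio_mul_conj a b
  have hnorm_ne : a ^ 2 + a * b - b ^ 2 ≠ 0 := by
    rintro h0
    rw [h0, Int.cast_zero] at hnorm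
    exact mul_ne_zero h (int_add_int_mul_goldenConj_ne_zero h) hnorm
  rw [← abs_mul, hnorm, ← Int.cast_abs]
  exact_mod_cast Int.one_le_abs hnorm_ne

theorem inv_le_abs_int_add_int_mul_goldenRatio {a b : ℤ} {w : ℝ} (h : (a : ℝ) + b * φ ≠ 0)
    (hw : |(a : ℝ) + b * ψ| ≤ w) : w⁻¹ ≤ |(a : ℝ) + b * φ| := by
  have hnorm := one_le_abs_int_add_int_mul_goldenRatio_mul_abs_conj h
  have hconj_pos : 0 < |(a : ℝ) + b * ψ| := abs_pos.mpr (int_add_int_mul_goldenConj_ne_zero h)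
  calc w⁻¹ ≤ |(a : ℝ) + b * ψ|⁻¹ := inv_anti₀ hconj_pos hw
    _ ≤ |(a : ℝ) + b * φ| := by rwa [inv_le_iff_one_le_mul₀ hconj_pos]

theorem goldenφ_eq_goldenRatio : goldenφ = φ := rfl

theorem goldenφ'_eq_goldenConj : goldenφ' = ψ := rfl

theorem exists_sub_eq_of_mem_goldenΛ {x y : ℝ} (hx : x ∈ goldenΛ) (hy : y ∈ goldenΛ) :
    ∃ a b : ℤ, x - y = a + b * φ ∧ |(a : ℝ) + b * ψ| ≤ φ := by
  obtain ⟨m, n, rfl, hx₁, hx₂⟩ := hx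
  obtain ⟨m', n', rfl, hy₁, hy₂⟩ := hy
  rw [goldenφ_eq_goldenRatio, goldenφ'_eq_goldenConj] at *
  refine ⟨m - m', n - n', by push_cast; ring, abs_le.mpr ⟨?_, ?_⟩⟩ <;>
    · push_cast
      linarith

theorem stmt1 :
    ∃ r > 0, ∀ x ∈ goldenΛ, ∀ y ∈ goldenΛ, x ≠ y → r ≤ |x - y| := by
  refine ⟨φ⁻¹, inv_pos.mpr goldenRatio_pos, fun x hx y hy hxy ↦ ?_⟩
  obtain ⟨a, b, hab, hwindow⟩ := exists_sub_eq_of_mem_goldenΛ hx hy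
  rw [hab]
  exact inv_le_abs_int_add_int_mul_goldenRatio (hab ▸ sub_ne_zero.mpr hxy) hwindow
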